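/- arXiv:2308.05883 — 3 statements merged into one kernel-verified Lean document; each statement's English description precedes it below -/
import Mathlib

section
/- For a joint density f(y, s) with marginal f₁(y) of the first coordinate, the conditional Fisher information dominates the marginal Fisher information: I_{Y|S} ≥ I_Y, where I_Y = ∫ (f₁'(y)/f₁(y))² f₁(y) dy and I_{Y|S} = ∫∫ (∂_y f(y|s)/f(y|s))² f(y, s) dy ds. Moreover, the difference I_{Y|S} − I_Y equals ∫∫ (∂_y f(s|y)/f(s|y))² f(y, s) dy ds. -/
/-!
Fix `y`. The conditional score `∂_y log f(s|y) = ∂_y f(y,s)/f(y,s) - f₁'(y)/f₁(y)` is the score of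
`f(y|s)` minus its mean under `f(s|y)`, because `f₁'(y) = ∫ ∂_y f(y,s) ds`. Hence the inner
`s`-integral of its square is a variance, equal to the second moment of the score of `f(y|s)` minus
the square of its mean, `(f₁'/f₁)² f₁`. Integrating in `y` gives the identity, and the inequality
follows because the remaining term is an integral of squares.
-/

open MeasureTheory

/-- The logarithmic derivative of a quotient: `(u / v)' / (u / v) = u' / u - v' / v`. -/
lemma div_sq_div_div_eq_div_sub_div {u v u' v' : ℝ} (hu : u ≠ 0) (hv : v ≠ 0) :
    ((u' * v - u * v') / v ^ 2) / (u / v) = u' / u - v' / v := by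
  field_simp

lemma integral_sq_div_sub_mean_mul_eq {α : Type*} [MeasurableSpace α] {μ : Measure α}
    {p a : α → ℝ} (hp : ∀ᵐ x ∂μ, p x ≠ 0) (hp_int : Integrable p μ)
    (ha : Integrable (fun x => (a x / p x) ^ 2 * p x) μ) :
    ∫ x, (a x / p x - (∫ x, a x ∂μ) / ∫ x, p x ∂μ) ^ 2 * p x ∂μ
      = ∫ x, (a x / p x) ^ 2 * p x ∂μ - ((∫ x, a x ∂μ) / ∫ x, p x ∂μ) ^ 2 * ∫ x, p x ∂μ := by
  by_cases ha_int : Integrable a μ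
  swap
  · -- the junk value `∫ a = 0` makes the mean vanish
    simp [integral_undef ha_int]
  set c := (∫ x, a x ∂μ) / ∫ x, p x ∂μ with hc
  have hexpand : (fun x => (a x / p x - c) ^ 2 * p x)
      =ᵐ[μ] fun x => (a x / p x) ^ 2 * p x - (2 * c * a x - c ^ 2 * p x) := by
    filter_upwards [hp] with x hx
    field_simp
    ring
  have hlin : Integrable (fun x => 2 * c * a x - c ^ 2 * p x) μ :=
    (ha_int.const_mul _).sub (hp_int.const_mul _)
  rw [integral_congr_ae hexpand, integral_sub ha hlin,
    integral_sub (ha_int.const_mul _) (hp_int.const_mul _), integral_const_mul, integral_const_mul]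
  rcases eq_or_ne (∫ x, p x ∂μ) 0 with hZ | hZ
  · simp [hc, hZ]
  · rw [hc]
    field_simp
    ring

theorem conditional_fisher_info_ge_marginal_general (K : ℕ)
    (f fy : ℝ → (Fin K → ℝ) → ℝ)
    (hfpos : ∀ y s, 0 < f y s)
    (f1 : ℝ → ℝ) (hf1 : ∀ y, f1 y = ∫ s, f y s)
    (hf1pos : ∀ y, 0 < f1 y)
    -- integrability assumptions guaranteeing that all displayed integrals are finite
    (hIY : Integrable (fun y => ((∫ s, fy y s) / f1 y) ^ 2 * f1 y))
    (hIYS₁ : ∀ y, Integrable (fun s => (fy y s / f y s) ^ 2 * f y s))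
    (hIYS₂ : Integrable (fun y => ∫ s, (fy y s / f y s) ^ 2 * f y s)) :
    (∫ y, ((∫ s, fy y s) / f1 y) ^ 2 * f1 y)
        ≤ (∫ y, ∫ s, (fy y s / f y s) ^ 2 * f y s)
    ∧ (∫ y, ∫ s, (fy y s / f y s) ^ 2 * f y s)
        - (∫ y, ((∫ s, fy y s) / f1 y) ^ 2 * f1 y)
      = ∫ y, ∫ s,
          (((fy y s * f1 y - f y s * (∫ s', fy y s')) / (f1 y) ^ 2) / (f y s / f1 y)) ^ 2
            * f y s := by
  have hvariance : ∀ y,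
      (∫ s, (((fy y s * f1 y - f y s * (∫ s', fy y s')) / (f1 y) ^ 2) / (f y s / f1 y)) ^ 2
          * f y s)
        = (∫ s, (fy y s / f y s) ^ 2 * f y s) - ((∫ s, fy y s) / f1 y) ^ 2 * f1 y := by
    intro y
    have hf_int : Integrable (f y) := .of_integral_ne_zero (hf1 y ▸ (hf1pos y).ne')
    simp_rw [div_sq_div_div_eq_div_sub_div (hfpos y _).ne' (hf1pos y).ne', hf1 y]
    exact integral_sq_div_sub_mean_mul_eq (.of_forall fun s => (hfpos y s).ne') hf_int (hIYS₁ y)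
  have hdiff : (∫ y, ∫ s,
        (((fy y s * f1 y - f y s * (∫ s', fy y s')) / (f1 y) ^ 2) / (f y s / f1 y)) ^ 2 * f y s)
      = (∫ y, ∫ s, (fy y s / f y s) ^ 2 * f y s)
        - (∫ y, ((∫ s, fy y s) / f1 y) ^ 2 * f1 y) := by
    simp_rw [hvariance]
    exact integral_sub hIYS₂ hIY
  have hnonneg : 0 ≤ ∫ y, ∫ s,
      (((fy y s * f1 y - f y s * (∫ s', fy y s')) / (f1 y) ^ 2) / (f y s / f1 y)) ^ 2 * f y s :=
    integral_nonneg fun y => integral_nonneg fun s => mul_nonneg (sq_nonneg _) (hfpos y s).le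
  exact ⟨by linarith, hdiff.symm⟩

/-- **Fisher information decomposition.** For a joint density `f(y,s)` with marginal
`f₁(y) = ∫ f(y,s) ds`, the conditional Fisher information dominates the marginal one:
`I_{Y|S} ≥ I_Y`, and moreover
`I_{Y|S} − I_Y = ∫∫ (∂_y f(s|y) / f(s|y))² f(y,s) dy ds`,
where `f(s|y) = f(y,s)/f₁(y)` and the score of `f(y|s)` in `y` is `∂_y f(y,s)/f(y,s)`. -/
theorem conditional_fisher_info_ge_marginal (K : ℕ)
    (f fy : ℝ → (Fin K → ℝ) → ℝ)
    (hfpos : ∀ y s, 0 < f y s)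
    (f1 : ℝ → ℝ) (hf1 : ∀ y, f1 y = ∫ s, f y s)
    (hf1pos : ∀ y, 0 < f1 y)
    -- `fy` is the partial derivative of `f` in its first argument
    (hfy : ∀ s y, HasDerivAt (fun y' => f y' s) (fy y s) y)
    -- differentiation under the integral sign:  `f₁'(y) = ∫ ∂_y f(y,s) ds`
    (hf1deriv : ∀ y, HasDerivAt f1 (∫ s, fy y s) y)
    -- integrability assumptions guaranteeing that all displayed integrals are finite
    (hIY : Integrable (fun y => ((∫ s, fy y s) / f1 y) ^ 2 * f1 y))
    (hIYS₁ : ∀ y, Integrable (fun s => (fy y s / f y s) ^ 2 * f y s))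
    (hIYS₂ : Integrable (fun y => ∫ s, (fy y s / f y s) ^ 2 * f y s))
    (hD₁ : ∀ y, Integrable (fun s =>
      (((fy y s * f1 y - f y s * (∫ s', fy y s')) / (f1 y) ^ 2) / (f y s / f1 y)) ^ 2 * f y s))
    (hD₂ : Integrable (fun y => ∫ s,
      (((fy y s * f1 y - f y s * (∫ s', fy y s')) / (f1 y) ^ 2) / (f y s / f1 y)) ^ 2 * f y s)) :
    (∫ y, ((∫ s, fy y s) / f1 y) ^ 2 * f1 y)
        ≤ (∫ y, ∫ s, (fy y s / f y s) ^ 2 * f y s)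
    ∧ (∫ y, ∫ s, (fy y s / f y s) ^ 2 * f y s)
        - (∫ y, ((∫ s, fy y s) / f1 y) ^ 2 * f1 y)
      = ∫ y, ∫ s,
          (((fy y s * f1 y - f y s * (∫ s', fy y s')) / (f1 y) ^ 2) / (f y s / f1 y)) ^ 2
            * f y s :=
  conditional_fisher_info_ge_marginal_general K f fy hfpos f1 hf1 hf1pos hIY hIYS₁ hIYS₂
end

section
/- Brown's identity: if Y = θ + ε with ε ~ N(0, σ²) independent of θ ~ G, and f is the marginal density of Y, then the Bayes risk of the posterior mean estimator δ(y) = y + σ² f'(y)/f(y) equals σ² − σ⁴ I(f), where I(f) = ∫ (f'(y))²/f(y) dy is the Fisher information of the marginal density. -/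
open MeasureTheory ProbabilityTheory Real

/-- The Gaussian density with mean 0 and variance σ². -/
noncomputable def gaussDensity (σ x : ℝ) : ℝ :=
  (Real.sqrt (2 * Real.pi * σ ^ 2))⁻¹ * Real.exp (-x ^ 2 / (2 * σ ^ 2))

open scoped NNReal ENNReal

local notation "𝒩[" σ "]" => gaussianReal 0 (Real.toNNReal (σ ^ 2))

/-! Writing `h = f' / f`, the error of `δ` is `ε + σ² h(Y)`, so the risk is
`E ε² + 2σ² E[ε h(Y)] + σ⁴ E[h(Y)²]`. Integrating out the prior gives
`E[h(Y)²] = ∫ h² f = I(f)`. Differentiating `f(y) = ∫ φ_σ(y - t) dG(t)` under the integral gives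
Tweedie's formula `∫ (y - t) φ_σ(y - t) dG(t) = -σ² f'(y)`, which turns `E[ε h(Y)]` into
`-σ² ∫ h f' = -σ² I(f)`. -/

theorem div_sq_mul_self {K : Type*} [Field K] (a b : K) : (a / b) ^ 2 * b = a ^ 2 / b := by
  rcases eq_or_ne b 0 with rfl | hb
  · simp
  · field_simp

theorem integral_add_const_mul_sq {Ω : Type*} [MeasurableSpace Ω] {μ : Measure Ω}
    {X Z : Ω → ℝ} (hX : MemLp X 2 μ) (hZ : MemLp Z 2 μ) (c : ℝ) :
    ∫ ω, (X ω + c * Z ω) ^ 2 ∂μ =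
      ∫ ω, X ω ^ 2 ∂μ + 2 * c * ∫ ω, X ω * Z ω ∂μ + c ^ 2 * ∫ ω, Z ω ^ 2 ∂μ := by
  have hXZ : Integrable (fun ω => X ω * Z ω) μ := hX.integrable_mul hZ
  calc ∫ ω, (X ω + c * Z ω) ^ 2 ∂μ
      = ∫ ω, X ω ^ 2 + 2 * c * (X ω * Z ω) + c ^ 2 * Z ω ^ 2 ∂μ := by congr 1 with ω; ring
    _ = _ := by
      rw [integral_add (hX.integrable_sq.fun_add (hXZ.const_mul _))
          (hZ.integrable_sq.const_mul _), integral_add hX.integrable_sq (hXZ.const_mul _),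
        integral_const_mul, integral_const_mul]

section Shear

variable {G : Type*} [MeasurableSpace G] [AddCommGroup G] [MeasurableAdd₂ G] [MeasurableNeg G]
  {ν μ : Measure G} [SFinite ν] [SFinite μ] [μ.IsAddLeftInvariant]

theorem integral_prod_withDensity_eq_integral_integral_sub {p : G → ℝ} (hp : Measurable p)
    (hp₀ : 0 ≤ p) {F : G × G → ℝ}
    (hF : Integrable F (ν.prod (μ.withDensity fun x => ENNReal.ofReal (p x)))) :
    ∫ z, F z ∂ν.prod (μ.withDensity fun x => ENNReal.ofReal (p x)) =
      ∫ y, ∫ t, F (t, y - t) * p (y - t) ∂ν ∂μ := by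
  have hq : Measurable fun z : G × G => ENNReal.ofReal (p z.2) := by fun_prop
  have hq_toReal : ∀ z : G × G, (ENNReal.ofReal (p z.2)).toReal = p z.2 :=
    fun z => ENNReal.toReal_ofReal (hp₀ z.2)
  rw [prod_withDensity_right (g := fun x => ENNReal.ofReal (p x)) (by fun_prop)] at hF ⊢
  rw [integrable_withDensity_iff hq (ae_of_all _ fun _ => ENNReal.ofReal_lt_top)] at hF
  rw [integral_withDensity_eq_integral_toReal_smul hq
    (ae_of_all _ fun _ => ENNReal.ofReal_lt_top)]
  simp only [hq_toReal, smul_eq_mul] at hF ⊢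
  set H : G × G → ℝ := fun z => F (z.1, z.2 - z.1) * p (z.2 - z.1)
  have hH_shear : H ∘ MeasurableEquiv.shearAddRight G = fun z => F z * p z.2 := by
    ext ⟨t, x⟩
    simp [H, MeasurableEquiv.shearAddRight]
  have hshear : MeasurePreserving (MeasurableEquiv.shearAddRight G) (ν.prod μ) (ν.prod μ) :=
    measurePreserving_prod_add ν μ
  have hH : Integrable H (ν.prod μ) := by
    rw [← hshear.integrable_comp_emb (MeasurableEquiv.measurableEmbedding _), hH_shear]
    exact hF
  calc ∫ z, p z.2 * F z ∂ν.prod μ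
        = ∫ z, H (MeasurableEquiv.shearAddRight G z) ∂ν.prod μ := by
        simp_rw [← Function.comp_apply (f := H), hH_shear, mul_comm]
    _ = ∫ z, H z ∂ν.prod μ := hshear.integral_comp' H
    _ = _ := integral_prod_symm H hH

end Shear

section Gaussian

theorem gaussDensity_eq_gaussianPDFReal (σ : ℝ) :
    gaussDensity σ = gaussianPDFReal 0 (σ ^ 2).toNNReal := by
  ext x
  simp [gaussDensity, gaussianPDFReal, Real.coe_toNNReal _ (sq_nonneg σ)]

theorem gaussianReal_eq_withDensity_gaussDensity {σ : ℝ} (hσ : σ ≠ 0) :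
    𝒩[σ] = volume.withDensity fun x => ENNReal.ofReal (gaussDensity σ x) := by
  rw [gaussianReal_of_var_ne_zero 0 (by positivity), gaussDensity_eq_gaussianPDFReal]
  rfl

theorem gaussDensity_nonneg (σ x : ℝ) : 0 ≤ gaussDensity σ x := by
  unfold gaussDensity; positivity

@[fun_prop]
theorem continuous_gaussDensity (σ : ℝ) : Continuous (gaussDensity σ) := by
  unfold gaussDensity; fun_prop

theorem gaussDensity_le (σ x : ℝ) : gaussDensity σ x ≤ (√(2 * π * σ ^ 2))⁻¹ := by
  unfold gaussDensity
  refine mul_le_of_le_one_right (by positivity) (exp_le_one_iff.mpr ?_)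
  exact div_nonpos_of_nonpos_of_nonneg (neg_nonpos.mpr (sq_nonneg x)) (by positivity)

theorem abs_mul_gaussDensity_le {σ : ℝ} (hσ : 0 < σ) (x : ℝ) :
    |x * gaussDensity σ x| ≤ σ * (√(2 * π * σ ^ 2))⁻¹ := by
  set u := x ^ 2 / (2 * σ ^ 2)
  -- `|x| / σ ≤ 1 + u ≤ exp u`, the first step being AM-GM
  have hx : |x| ≤ σ * exp u := by
    have hAMGM : |x| ≤ σ * (1 + u) := by
      have : 2 * σ * |x| ≤ 2 * σ ^ 2 + x ^ 2 := by nlinarith [sq_nonneg (|x| - σ), sq_abs x]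
      simp only [u]
      field_simp
      nlinarith
    nlinarith [add_one_le_exp u]
  rw [abs_mul, abs_of_nonneg (gaussDensity_nonneg σ x), gaussDensity, neg_div, mul_left_comm,
    mul_comm σ]
  gcongr
  calc |x| * exp (-u) ≤ σ * exp u * exp (-u) := by gcongr
    _ = σ := by rw [mul_assoc, ← exp_add, add_neg_cancel, exp_zero, mul_one]

theorem hasDerivAt_gaussDensity (σ x : ℝ) :
    HasDerivAt (gaussDensity σ) (-(x / σ ^ 2) * gaussDensity σ x) x := by
  refine (((hasDerivAt_pow 2 x).fun_neg.div_const (2 * σ ^ 2)).exp.const_mul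
    (√(2 * π * σ ^ 2))⁻¹).congr_deriv ?_
  simp only [gaussDensity]
  ring

theorem integral_sq_gaussianReal (v : ℝ≥0) : ∫ x, x ^ 2 ∂gaussianReal 0 v = v := by
  rw [← variance_of_integral_eq_zero aemeasurable_id' integral_id_gaussianReal,
    variance_fun_id_gaussianReal]

variable {ν : Measure ℝ} {σ : ℝ}

theorem integral_prod_gaussianReal [SFinite ν] (hσ : σ ≠ 0) {F : ℝ × ℝ → ℝ}
    (hF : Integrable F (ν.prod 𝒩[σ])) :
    ∫ z, F z ∂ν.prod 𝒩[σ] =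
      ∫ y, ∫ t, F (t, y - t) * gaussDensity σ (y - t) ∂ν := by
  rw [gaussianReal_eq_withDensity_gaussDensity hσ] at hF ⊢
  exact integral_prod_withDensity_eq_integral_integral_sub
    (continuous_gaussDensity σ).measurable (gaussDensity_nonneg σ) hF

end Gaussian

noncomputable def gaussMarginal (σ : ℝ) (ν : Measure ℝ) (y : ℝ) : ℝ :=
  ∫ t, gaussDensity σ (y - t) ∂ν

noncomputable def tweedie (σ : ℝ) (ν : Measure ℝ) (y : ℝ) : ℝ :=
  y + σ ^ 2 * deriv (gaussMarginal σ ν) y / gaussMarginal σ ν y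

section Marginal

variable {σ : ℝ} (ν : Measure ℝ)

theorem hasDerivAt_gaussMarginal (hσ : 0 < σ) [IsFiniteMeasure ν] (y : ℝ) :
    HasDerivAt (gaussMarginal σ ν)
      (-(∫ t, (y - t) * gaussDensity σ (y - t) ∂ν) / σ ^ 2) y := by
  have hderiv := hasDerivAt_integral_of_dominated_loc_of_deriv_le (μ := ν) (x₀ := y)
    (F := fun y t => gaussDensity σ (y - t))
    (F' := fun y t => -((y - t) / σ ^ 2) * gaussDensity σ (y - t))
    (bound := fun _ => σ * (√(2 * π * σ ^ 2))⁻¹ / σ ^ 2) Filter.univ_mem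
    (.of_forall fun _ => by fun_prop)
    (.of_bound (by fun_prop) _ (.of_forall fun t => by
      rw [Real.norm_of_nonneg (gaussDensity_nonneg σ _)]; exact gaussDensity_le σ _))
    (by fun_prop)
    (.of_forall fun t x _ => by
      rw [neg_mul, norm_neg, div_mul_eq_mul_div, norm_div, Real.norm_of_nonneg (sq_nonneg σ)]
      gcongr
      exact abs_mul_gaussDensity_le hσ _)
    (integrable_const _)
    (.of_forall fun t x _ => (hasDerivAt_gaussDensity σ (x - t)).comp_sub_const x t)
  refine hderiv.2.congr_deriv ?_
  rw [← integral_neg, ← integral_div]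
  congr 1 with t
  ring

theorem continuous_gaussMarginal (hσ : 0 < σ) [IsFiniteMeasure ν] :
    Continuous (gaussMarginal σ ν) :=
  continuous_iff_continuousAt.mpr fun y => (hasDerivAt_gaussMarginal ν hσ y).continuousAt

theorem measurable_tweedie (hσ : 0 < σ) [IsFiniteMeasure ν] : Measurable (tweedie σ ν) :=
  measurable_id.add (((measurable_deriv _).const_mul _).div
    (continuous_gaussMarginal ν hσ).measurable)

theorem integral_comp_add_prod_gaussianReal [SFinite ν] (hσ : σ ≠ 0) {k : ℝ → ℝ}
    (hk : Integrable (fun z : ℝ × ℝ => k (z.1 + z.2)) (ν.prod 𝒩[σ])) :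
    ∫ z, k (z.1 + z.2) ∂ν.prod 𝒩[σ] = ∫ y, k y * gaussMarginal σ ν y := by
  rw [integral_prod_gaussianReal hσ hk]
  congr 1 with y
  simp only [add_sub_cancel, gaussMarginal, integral_const_mul]

theorem integral_snd_mul_comp_add_prod_gaussianReal (hσ : 0 < σ) [IsFiniteMeasure ν]
    {k : ℝ → ℝ} (hk : Integrable (fun z : ℝ × ℝ => z.2 * k (z.1 + z.2)) (ν.prod 𝒩[σ])) :
    ∫ z, z.2 * k (z.1 + z.2) ∂ν.prod 𝒩[σ] =
      -σ ^ 2 * ∫ y, k y * deriv (gaussMarginal σ ν) y := by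
  rw [integral_prod_gaussianReal hσ.ne' hk, ← integral_const_mul]
  congr 1 with y
  rw [(hasDerivAt_gaussMarginal ν hσ y).deriv]
  have hcomm : ∀ t, (y - t) * k (t + (y - t)) * gaussDensity σ (y - t) =
      k y * ((y - t) * gaussDensity σ (y - t)) := fun t => by rw [add_sub_cancel]; ring
  simp_rw [hcomm, integral_const_mul]
  field_simp

theorem integral_sq_tweedie_sub_prod_gaussianReal (hσ : 0 < σ) [IsProbabilityMeasure ν]
    (hint : Integrable (fun z : ℝ × ℝ => (tweedie σ ν (z.1 + z.2) - z.1) ^ 2) (ν.prod 𝒩[σ])) :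
    ∫ z, (tweedie σ ν (z.1 + z.2) - z.1) ^ 2 ∂ν.prod 𝒩[σ] =
      σ ^ 2 - σ ^ 4 * ∫ y, deriv (gaussMarginal σ ν) y ^ 2 / gaussMarginal σ ν y := by
  set score : ℝ → ℝ := fun y => deriv (gaussMarginal σ ν) y / gaussMarginal σ ν y
  have herr : ∀ z : ℝ × ℝ, tweedie σ ν (z.1 + z.2) - z.1 = z.2 + σ ^ 2 * score (z.1 + z.2) :=
    fun z => by simp only [tweedie, score]; ring
  have hnoise : MemLp (fun z : ℝ × ℝ => z.2) 2 (ν.prod 𝒩[σ]) :=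
    (memLp_id_gaussianReal 2).comp_snd ν
  have hscore : MemLp (fun z : ℝ × ℝ => score (z.1 + z.2)) 2 (ν.prod 𝒩[σ]) := by
    have herr_meas := ((measurable_tweedie ν hσ).comp measurable_add).sub measurable_fst
    have herrL2 := (memLp_two_iff_integrable_sq herr_meas.aestronglyMeasurable).mpr hint
    convert (herrL2.sub hnoise).const_mul (σ ^ 2)⁻¹ using 2 with z
    rw [Pi.sub_apply, Pi.sub_apply, Function.comp_apply, herr]
    field_simp
    ring
  simp_rw [herr]
  rw [integral_add_const_mul_sq hnoise hscore, integral_fun_snd (fun x => x ^ 2),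
    integral_sq_gaussianReal, integral_snd_mul_comp_add_prod_gaussianReal ν hσ
      (hnoise.integrable_mul hscore),
    integral_comp_add_prod_gaussianReal ν hσ.ne' (k := fun y => score y ^ 2)
      hscore.integrable_sq]
  simp only [score, div_sq_mul_self, div_mul_eq_mul_div, ← sq, probReal_univ, one_smul,
    Real.coe_toNNReal _ (sq_nonneg σ)]
  ring

end Marginal

theorem browns_identity_general
    {Ω : Type*} [MeasurableSpace Ω] (μ : Measure Ω) [IsProbabilityMeasure μ]
    (θ ε : Ω → ℝ) (hθ : Measurable θ) (hε : Measurable ε)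
    (σ : ℝ) (hσ : 0 < σ)
    (hindep : IndepFun θ ε μ)
    (hlaw : μ.map ε = gaussianReal 0 (σ ^ 2).toNNReal)
    (f : ℝ → ℝ) (hf : ∀ y, f y = ∫ t, gaussDensity σ (y - t) ∂(μ.map θ))
    (δ : ℝ → ℝ) (hδ : ∀ y, δ y = y + σ ^ 2 * deriv f y / f y)
    (hrisk : Integrable (fun ω => (δ (θ ω + ε ω) - θ ω) ^ 2) μ) :
    ∫ ω, (δ (θ ω + ε ω) - θ ω) ^ 2 ∂μ
      = σ ^ 2 - σ ^ 4 * ∫ y, (deriv f y) ^ 2 / f y := by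
  set ν := μ.map θ
  have : IsProbabilityMeasure ν := Measure.isProbabilityMeasure_map hθ.aemeasurable
  obtain rfl : f = gaussMarginal σ ν := funext hf
  obtain rfl : δ = tweedie σ ν := funext hδ
  have hpair : AEMeasurable (fun ω => (θ ω, ε ω)) μ := (hθ.prodMk hε).aemeasurable
  have hjoint : μ.map (fun ω => (θ ω, ε ω)) = ν.prod 𝒩[σ] :=
    hlaw ▸ (indepFun_iff_map_prod_eq_prod_map_map hθ.aemeasurable hε.aemeasurable).mp hindep
  have hloss : AEStronglyMeasurable (fun z : ℝ × ℝ => (tweedie σ ν (z.1 + z.2) - z.1) ^ 2)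
      (μ.map fun ω => (θ ω, ε ω)) :=
    (((measurable_tweedie ν hσ).comp measurable_add).sub measurable_fst).pow_const 2
      |>.aestronglyMeasurable
  rw [← integral_map hpair hloss, hjoint]
  exact integral_sq_tweedie_sub_prod_gaussianReal ν hσ
    (hjoint ▸ (integrable_map_measure hloss hpair).mpr hrisk)

/-- **Brown's identity.** If `Y = θ + ε` with `ε ~ N(0, σ²)` independent of `θ ~ G`, and `f`
is the marginal density of `Y`, then the Bayes risk of the posterior-mean estimator
`δ(y) = y + σ² f'(y)/f(y)` equals `σ² − σ⁴ I(f)`, where `I(f) = ∫ f'(y)²/f(y) dy`. -/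
theorem browns_identity
    {Ω : Type*} [MeasurableSpace Ω] (μ : Measure Ω) [IsProbabilityMeasure μ]
    (θ ε : Ω → ℝ) (hθ : Measurable θ) (hε : Measurable ε)
    (σ : ℝ) (hσ : 0 < σ)
    (hindep : IndepFun θ ε μ)
    (hlaw : μ.map ε = gaussianReal 0 (σ ^ 2).toNNReal)
    (hmom : Integrable (fun ω => (θ ω) ^ 2) μ)
    (f : ℝ → ℝ) (hf : ∀ y, f y = ∫ t, gaussDensity σ (y - t) ∂(μ.map θ))
    (hfpos : ∀ y, 0 < f y) (hfdiff : Differentiable ℝ f)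
    (δ : ℝ → ℝ) (hδ : ∀ y, δ y = y + σ ^ 2 * deriv f y / f y)
    (hrisk : Integrable (fun ω => (δ (θ ω + ε ω) - θ ω) ^ 2) μ)
    (hfisher : Integrable (fun y => (deriv f y) ^ 2 / f y)) :
    ∫ ω, (δ (θ ω + ε ω) - θ ω) ^ 2 ∂μ
      = σ ^ 2 - σ ^ 4 * ∫ y, (deriv f y) ^ 2 / f y :=
  browns_identity_general μ θ ε hθ hε σ hσ hindep hlaw f hf δ hδ hrisk
end

section
/- Uncorrelated noise-splitting pair: let Y, η be independent random variables with η ~ N(0, σ²), and let α > 0. Define U = Y + αη and V = Y − η/α. Then Cov(U, V) = Var(Y) − σ², so in particular if Y = θ + ε with ε ~ N(0, σ²) independent of θ (θ deterministic), then Cov(U, V) = 0, and E[(δ(U) − V)²] = E[(δ(U) − θ)²] + σ²(1 + 1/α²) for any measurable function δ of U. -/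
/-!
Expanding bilinearly, `Cov(Y + αη, Y - η/α) = Var Y - Var η` once `Y` and `η` are uncorrelated.
With `Y = θ + ε`, the same computation shows that `ε + αη` and `W = V - θ = ε - η/α` are
uncorrelated; being jointly Gaussian, they are independent. Hence the cross term in
`(δ(U) - θ - W)²` integrates to zero, and `E[W²] = Var ε + Var η / α² = σ²(1 + 1/α²)`.
-/

open MeasureTheory ProbabilityTheory
open scoped NNReal ENNReal

lemma MeasureTheory.MemLp.div_const {α 𝕜 : Type*} [MeasurableSpace α] [NormedDivisionRing 𝕜]
    {p : ℝ≥0∞} {μ : Measure α} {f : α → 𝕜} (hf : MemLp f p μ) (c : 𝕜) :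
    MemLp (fun x ↦ f x / c) p μ := by
  simpa only [div_eq_mul_inv] using hf.mul_const c⁻¹

namespace ProbabilityTheory.IndepFun

variable {Ω : Type*} [MeasurableSpace Ω] {μ : Measure Ω}

lemma covariance_add_mul_sub_div [IsFiniteMeasure μ] {X Z : Ω → ℝ}
    (hX : MemLp X 2 μ) (hZ : MemLp Z 2 μ) (hXZ : IndepFun X Z μ) {α : ℝ} (hα : α ≠ 0) :
    cov[fun ω ↦ X ω + α * Z ω, fun ω ↦ X ω - Z ω / α; μ] = Var[X; μ] - Var[Z; μ] := by
  have hZα : MemLp (fun ω ↦ Z ω / α) 2 μ := hZ.div_const α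
  change cov[X + (fun ω ↦ α * Z ω), X - (fun ω ↦ Z ω / α); μ] = _
  rw [covariance_add_left hX (hZ.const_mul α) (hX.sub hZα), covariance_const_mul_left,
    covariance_sub_right hX hX hZα, covariance_sub_right hZ hX hZα,
    covariance_fun_div_right, covariance_fun_div_right, covariance_self hX.aemeasurable,
    covariance_self hZ.aemeasurable, hXZ.covariance_eq_zero hX hZ,
    hXZ.symm.covariance_eq_zero hZ hX]
  field_simp
  ring

lemma variance_sub_div [IsFiniteMeasure μ] {X Z : Ω → ℝ}
    (hX : MemLp X 2 μ) (hZ : MemLp Z 2 μ) (hXZ : IndepFun X Z μ) (α : ℝ) :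
    Var[fun ω ↦ X ω - Z ω / α; μ] = Var[X; μ] + Var[Z; μ] / α ^ 2 := by
  rw [variance_fun_sub hX (hZ.div_const α), covariance_fun_div_right,
    hXZ.covariance_eq_zero hX hZ]
  simp_rw [div_eq_mul_inv, variance_mul_const]
  ring

lemma integral_sub_sq [IsProbabilityMeasure μ] {A W : Ω → ℝ}
    (hA : MemLp A 2 μ) (hW : MemLp W 2 μ) (hAW : IndepFun A W μ) (hW₀ : μ[W] = 0) :
    ∫ ω, (A ω - W ω) ^ 2 ∂μ = ∫ ω, A ω ^ 2 ∂μ + Var[W; μ] := by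
  have hcross : ∫ ω, A ω * W ω ∂μ = 0 := by
    rw [hAW.integral_fun_mul_eq_mul_integral hA.aestronglyMeasurable hW.aestronglyMeasurable,
      hW₀, mul_zero]
  have hA2 := hA.integrable_sq
  have hAW2 : Integrable (fun ω ↦ 2 * (A ω * W ω)) μ := (hA.integrable_mul hW).const_mul 2
  have hA2AW : Integrable (fun ω ↦ A ω ^ 2 - 2 * (A ω * W ω)) μ := hA2.sub hAW2
  calc ∫ ω, (A ω - W ω) ^ 2 ∂μ
      = ∫ ω, (A ω ^ 2 - 2 * (A ω * W ω) + W ω ^ 2) ∂μ := by congr 1 with ω; ring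
    _ = ∫ ω, A ω ^ 2 ∂μ - 2 * ∫ ω, A ω * W ω ∂μ + ∫ ω, W ω ^ 2 ∂μ := by
      rw [integral_add hA2AW hW.integrable_sq, integral_sub hA2 hAW2, integral_const_mul]
    _ = ∫ ω, A ω ^ 2 ∂μ + Var[W; μ] := by
      rw [variance_eq_sub hW, hW₀, hcross]
      simp

variable {ε η : Ω → ℝ} {v : ℝ≥0} {α : ℝ}

lemma indepFun_add_mul_sub_div_of_gaussianReal {m₁ m₂ : ℝ}
    (hε : HasLaw ε (gaussianReal m₁ v) μ) (hη : HasLaw η (gaussianReal m₂ v) μ)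
    (hεη : IndepFun ε η μ) (hα : α ≠ 0) :
    IndepFun (fun ω ↦ ε ω + α * η ω) (fun ω ↦ ε ω - η ω / α) μ := by
  have hpair : HasGaussianLaw (fun ω ↦ (ε ω, η ω)) μ :=
    hεη.hasGaussianLaw hε.hasGaussianLaw hη.hasGaussianLaw
  have := hpair.isProbabilityMeasure
  let L : ℝ × ℝ →L[ℝ] ℝ × ℝ :=
    (ContinuousLinearMap.fst ℝ ℝ ℝ + α • ContinuousLinearMap.snd ℝ ℝ ℝ).prod
      (ContinuousLinearMap.fst ℝ ℝ ℝ - α⁻¹ • ContinuousLinearMap.snd ℝ ℝ ℝ)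
  have hUW : HasGaussianLaw (fun ω ↦ (ε ω + α * η ω, ε ω - η ω / α)) μ := by
    have hL : (fun ω ↦ (ε ω + α * η ω, ε ω - η ω / α)) = fun ω ↦ L (ε ω, η ω) := by
      ext ω <;> simp [L, div_eq_inv_mul]
    exact hL ▸ hpair.map_fun L
  refine hUW.indepFun_of_covariance_eq_zero ?_
  rw [hεη.covariance_add_mul_sub_div hε.hasGaussianLaw.memLp_two hη.hasGaussianLaw.memLp_two hα,
    hε.variance_eq, hη.variance_eq, variance_id_gaussianReal, variance_id_gaussianReal, sub_self]

lemma integral_sq_sub_sub_div_of_gaussianReal (hε : HasLaw ε (gaussianReal 0 v) μ)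
    (hη : HasLaw η (gaussianReal 0 v) μ) (hεη : IndepFun ε η μ) (hα : α ≠ 0)
    {f : ℝ → ℝ} (hf : Measurable f) (hf₂ : Integrable (fun ω ↦ f (ε ω + α * η ω) ^ 2) μ) :
    ∫ ω, (f (ε ω + α * η ω) - (ε ω - η ω / α)) ^ 2 ∂μ
      = ∫ ω, f (ε ω + α * η ω) ^ 2 ∂μ + v * (1 + 1 / α ^ 2) := by
  have := hε.isProbabilityMeasure
  have hε₂ : MemLp ε 2 μ := hε.hasGaussianLaw.memLp_two
  have hη₂ : MemLp η 2 μ := hη.hasGaussianLaw.memLp_two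
  have hA₂ : MemLp (fun ω ↦ f (ε ω + α * η ω)) 2 μ :=
    (memLp_two_iff_integrable_sq (hf.comp_aemeasurable
      (hε.aemeasurable.add (hη.aemeasurable.const_mul α))).aestronglyMeasurable).2 hf₂
  have hW₂ : MemLp (fun ω ↦ ε ω - η ω / α) 2 μ := hε₂.sub (hη₂.div_const α)
  have hW₀ : μ[fun ω ↦ ε ω - η ω / α] = 0 := by
    rw [integral_sub (hε₂.integrable one_le_two) ((hη₂.div_const α).integrable one_le_two),
      integral_div, hε.integral_eq, hη.integral_eq, integral_id_gaussianReal]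
    simp
  have hAW := (hεη.indepFun_add_mul_sub_div_of_gaussianReal hε hη hα).comp hf measurable_id
  rw [hAW.integral_sub_sq hA₂ hW₂ hW₀, hεη.variance_sub_div hε₂ hη₂, hε.variance_eq,
    hη.variance_eq, variance_id_gaussianReal]
  ring

end ProbabilityTheory.IndepFun

theorem noise_splitting_pair_general
    {Ω : Type*} [MeasurableSpace Ω] (μ : Measure Ω) [IsProbabilityMeasure μ]
    (θ σ α : ℝ) (hα : 0 < α)
    (Y ε η : Ω → ℝ) (hεm : Measurable ε) (hηm : Measurable η)
    (hY : ∀ ω, Y ω = θ + ε ω)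
    (hindep : IndepFun ε η μ)
    (hεlaw : μ.map ε = gaussianReal 0 (σ ^ 2).toNNReal)
    (hηlaw : μ.map η = gaussianReal 0 (σ ^ 2).toNNReal)
    (U V : Ω → ℝ)
    (hU : ∀ ω, U ω = Y ω + α * η ω)
    (hV : ∀ ω, V ω = Y ω - η ω / α)
    (δ : ℝ → ℝ) (hδ : Measurable δ)
    (hint₁ : Integrable (fun ω => (δ (U ω) - θ) ^ 2) μ) :
    ((∫ ω, U ω * V ω ∂μ) - (∫ ω, U ω ∂μ) * (∫ ω, V ω ∂μ) = variance Y μ - σ ^ 2)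
    ∧ ((∫ ω, U ω * V ω ∂μ) - (∫ ω, U ω ∂μ) * (∫ ω, V ω ∂μ) = 0)
    ∧ (∫ ω, (δ (U ω) - V ω) ^ 2 ∂μ)
        = (∫ ω, (δ (U ω) - θ) ^ 2 ∂μ) + σ ^ 2 * (1 + 1 / α ^ 2) := by
  have hε : HasLaw ε (gaussianReal 0 (σ ^ 2).toNNReal) μ := ⟨hεm.aemeasurable, hεlaw⟩
  have hη : HasLaw η (gaussianReal 0 (σ ^ 2).toNNReal) μ := ⟨hηm.aemeasurable, hηlaw⟩
  have hv : ((σ ^ 2).toNNReal : ℝ) = σ ^ 2 := Real.coe_toNNReal _ (sq_nonneg σ)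
  have hε₂ : MemLp ε 2 μ := hε.hasGaussianLaw.memLp_two
  have hη₂ : MemLp η 2 μ := hη.hasGaussianLaw.memLp_two
  obtain rfl : Y = fun ω ↦ θ + ε ω := funext hY
  obtain rfl : U = fun ω ↦ θ + ε ω + α * η ω := funext hU
  obtain rfl : V = fun ω ↦ θ + ε ω - η ω / α := funext hV
  have hY₂ : MemLp (fun ω ↦ θ + ε ω) 2 μ := (memLp_const θ).add hε₂
  have hcov : (∫ ω, (θ + ε ω + α * η ω) * (θ + ε ω - η ω / α) ∂μ)
      - (∫ ω, θ + ε ω + α * η ω ∂μ) * (∫ ω, θ + ε ω - η ω / α ∂μ)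
      = Var[fun ω ↦ θ + ε ω; μ] - σ ^ 2 := calc
    _ = cov[fun ω ↦ θ + ε ω + α * η ω, fun ω ↦ θ + ε ω - η ω / α; μ] :=
      (covariance_eq_sub (hY₂.add (hη₂.const_mul α)) (hY₂.sub (hη₂.div_const α))).symm
    _ = _ := by
      rw [(hindep.comp (measurable_const_add θ) measurable_id).covariance_add_mul_sub_div hY₂ hη₂
        hα.ne', hη.variance_eq, variance_id_gaussianReal, hv]
  have hVarY : Var[fun ω ↦ θ + ε ω; μ] = σ ^ 2 := by
    rw [variance_const_add hε₂.aestronglyMeasurable, hε.variance_eq, variance_id_gaussianReal, hv]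
  refine ⟨hcov, hcov.trans (by rw [hVarY, sub_self]), ?_⟩
  have hrisk := hindep.integral_sq_sub_sub_div_of_gaussianReal hε hη hα.ne'
    (f := fun x ↦ δ (θ + x) - θ) (by fun_prop) (by simpa only [add_assoc] using hint₁)
  simp only [← add_assoc, hv] at hrisk
  rw [← hrisk]
  congr 1 with ω
  ring

/-- **Uncorrelated noise-splitting pair.** Let `Y, η` be independent with `η ~ N(0, σ²)`,
`α > 0`, `U = Y + αη`, `V = Y − η/α`.  Then `Cov(U, V) = Var(Y) − σ²`; in particular if
`Y = θ + ε` with `θ` deterministic and `ε ~ N(0, σ²)`, then `Cov(U, V) = 0` and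
`E[(δ(U) − V)²] = E[(δ(U) − θ)²] + σ²(1 + 1/α²)` for any measurable `δ`. -/
theorem noise_splitting_pair
    {Ω : Type*} [MeasurableSpace Ω] (μ : Measure Ω) [IsProbabilityMeasure μ]
    (θ σ α : ℝ) (hσ : 0 < σ) (hα : 0 < α)
    (Y ε η : Ω → ℝ) (hεm : Measurable ε) (hηm : Measurable η)
    (hY : ∀ ω, Y ω = θ + ε ω)
    (hindep : IndepFun ε η μ)
    (hεlaw : μ.map ε = gaussianReal 0 (σ ^ 2).toNNReal)
    (hηlaw : μ.map η = gaussianReal 0 (σ ^ 2).toNNReal)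
    (U V : Ω → ℝ)
    (hU : ∀ ω, U ω = Y ω + α * η ω)
    (hV : ∀ ω, V ω = Y ω - η ω / α)
    (δ : ℝ → ℝ) (hδ : Measurable δ)
    (hint₁ : Integrable (fun ω => (δ (U ω) - θ) ^ 2) μ)
    (hint₂ : Integrable (fun ω => (δ (U ω) - V ω) ^ 2) μ) :
    ((∫ ω, U ω * V ω ∂μ) - (∫ ω, U ω ∂μ) * (∫ ω, V ω ∂μ) = variance Y μ - σ ^ 2)
    ∧ ((∫ ω, U ω * V ω ∂μ) - (∫ ω, U ω ∂μ) * (∫ ω, V ω ∂μ) = 0)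
    ∧ (∫ ω, (δ (U ω) - V ω) ^ 2 ∂μ)
        = (∫ ω, (δ (U ω) - θ) ^ 2 ∂μ) + σ ^ 2 * (1 + 1 / α ^ 2) :=
  noise_splitting_pair_general μ θ σ α hα Y ε η hεm hηm hY hindep hεlaw hηlaw U V hU hV δ hδ hint₁
end
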